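/- Let X be a δ-hyperbolic space and let x, y, z ∈ X. Fix a geodesic segment σ between x and y, and suppose that d(z,x) = d(z,y) = min_{w ∈ σ} d(z,w), i.e., x and y are both points of σ at minimal distance from z. Then d(x,y) ≤ 4δ. -/

import Mathlib

/-- A geodesic segment between `a` and `b`: the image of an isometric embedding of the
real interval `[0, dist a b]` sending the endpoints to `a` and `b`. -/
def IsGeodesicSegment {X : Type*} [MetricSpace X] (a b : X) (s : Set X) : Prop :=
  ∃ f : ℝ → X, f 0 = a ∧ f (dist a b) = b ∧
    (∀ u ∈ Set.Icc (0 : ℝ) (dist a b), ∀ v ∈ Set.Icc (0 : ℝ) (dist a b),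
      dist (f u) (f v) = |u - v|) ∧
    s = f '' Set.Icc (0 : ℝ) (dist a b)

/-- A geodesic metric space: every pair of points is joined by a geodesic segment. -/
def GeodesicSpace (X : Type*) [MetricSpace X] : Prop :=
  ∀ a b : X, ∃ s : Set X, IsGeodesicSegment a b s

/-- A geodesic triangle with sides `s₁, s₂, s₃` is `δ`-thin if each side is contained in
the closed `δ`-neighborhood of the union of the other two sides. -/
def ThinTriangle {X : Type*} [MetricSpace X] (δ : ℝ) (s₁ s₂ s₃ : Set X) : Prop :=
  (∀ p ∈ s₁, ∃ q ∈ s₂ ∪ s₃, dist p q ≤ δ) ∧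
  (∀ p ∈ s₂, ∃ q ∈ s₁ ∪ s₃, dist p q ≤ δ) ∧
  (∀ p ∈ s₃, ∃ q ∈ s₁ ∪ s₂, dist p q ≤ δ)

/-- A `δ`-hyperbolic space: a geodesic metric space in which every geodesic triangle is
`δ`-thin. -/
def IsHyperbolicSpace (X : Type*) [MetricSpace X] (δ : ℝ) : Prop :=
  GeodesicSpace X ∧
  ∀ (x y z : X) (sxy sxz syz : Set X),
    IsGeodesicSegment x y sxy → IsGeodesicSegment x z sxz → IsGeodesicSegment y z syz →
    ThinTriangle δ sxy sxz syz

/-!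
Let `m` be the midpoint of `σ`. By thinness of a triangle `x y z` with base `σ`, some point `q`
on a side `[x, z]` (or `[y, z]`) is `δ`-close to `m`. Since `x` is at least as close to `z` as `m`
is, `d(x, q) = d(x, z) - d(q, z) ≤ d(z, m) - d(z, q) ≤ d(q, m)`, so `d(x, y) / 2 = d(x, m) ≤ 2 δ`.
-/

namespace IsGeodesicSegment

variable {X : Type*} [MetricSpace X] {a b : X} {s : Set X}

lemma exists_param_dist_eq (hs : IsGeodesicSegment a b s) :
    ∃ f : ℝ → X, s = f '' Set.Icc 0 (dist a b) ∧
      ∀ t ∈ Set.Icc 0 (dist a b), dist a (f t) = t ∧ dist (f t) b = dist a b - t := by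
  obtain ⟨f, hf0, hfD, hiso, rfl⟩ := hs
  refine ⟨f, rfl, fun t ht => ⟨?_, ?_⟩⟩
  · rw [← hf0, hiso 0 ⟨le_rfl, dist_nonneg⟩ t ht, zero_sub, abs_neg, abs_of_nonneg ht.1]
  · rw [← hfD, hiso t ht _ ⟨dist_nonneg, le_rfl⟩, abs_sub_comm, abs_of_nonneg (sub_nonneg.2 ht.2),
      hfD]

lemma exists_mem_dist_eq (hs : IsGeodesicSegment a b s) {t : ℝ} (ht : t ∈ Set.Icc 0 (dist a b)) :
    ∃ p ∈ s, dist a p = t ∧ dist p b = dist a b - t := by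
  obtain ⟨f, rfl, hf⟩ := hs.exists_param_dist_eq
  exact ⟨f t, Set.mem_image_of_mem f ht, hf t ht⟩

lemma dist_add_dist_eq (hs : IsGeodesicSegment a b s) {p : X} (hp : p ∈ s) :
    dist a p + dist p b = dist a b := by
  obtain ⟨f, rfl, hf⟩ := hs.exists_param_dist_eq
  obtain ⟨t, ht, rfl⟩ := hp
  rw [(hf t ht).1, (hf t ht).2, add_sub_cancel]

lemma dist_le_two_mul_dist (hs : IsGeodesicSegment a b s) {m q : X} (hq : q ∈ s)
    (hm : dist b a ≤ dist b m) : dist a m ≤ 2 * dist m q := by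
  have hsplit : dist a q + dist q b = dist b a := by rw [hs.dist_add_dist_eq hq, dist_comm]
  have hbm : dist b m ≤ dist q b + dist m q := by
    rw [dist_comm q b, dist_comm m q]; exact dist_triangle b q m
  calc dist a m ≤ dist a q + dist m q := by rw [dist_comm m q]; exact dist_triangle a q m
    _ ≤ 2 * dist m q := by linarith

end IsGeodesicSegment

/-- If `x` and `y` are both points of a geodesic segment `σ` between them at minimal
distance from `z`, then `d(x,y) ≤ 4δ`. -/
theorem isoceles_lemma {X : Type*} [MetricSpace X] (δ : ℝ)
    (hX : IsHyperbolicSpace X δ) (x y z : X) (σ : Set X)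
    (hσ : IsGeodesicSegment x y σ)
    (heq : dist z x = dist z y)
    (hmin : ∀ w ∈ σ, dist z x ≤ dist z w) :
    dist x y ≤ 4 * δ := by
  obtain ⟨hgeo, hthin⟩ := hX
  obtain ⟨sxz, hsxz⟩ := hgeo x z
  obtain ⟨syz, hsyz⟩ := hgeo y z
  obtain ⟨m, hmσ, hxm, hmy⟩ := hσ.exists_mem_dist_eq (t := dist x y / 2)
    ⟨by positivity, half_le_self dist_nonneg⟩
  obtain ⟨q, hq, hmq⟩ := (hthin x y z σ sxz syz hσ hsxz hsyz).1 m hmσ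
  rcases hq with hq | hq
  · have hxm_le := hsxz.dist_le_two_mul_dist (m := m) hq (hmin m hmσ)
    linarith
  · have hym_le := hsyz.dist_le_two_mul_dist (m := m) hq (by rw [← heq]; exact hmin m hmσ)
    rw [dist_comm y m] at hym_le
    linarith
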